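/- Every finite disconnected simple graph that is {claw, K1 ∪ K3}-free has maximum degree at most two; that is, if G is not connected, contains no induced K_{1,3}, and contains no induced subgraph isomorphic to the disjoint union of a vertex and a triangle, then every vertex of G has degree at most two. -/

import Mathlib

/-!
Two neighbours of a vertex `v` of degree at least three are adjacent, since otherwise `v` and
three pairwise non-adjacent neighbours would form an induced claw; so `v` lies on a triangle.
In a `K1 ∪ K3`-free graph every vertex outside a triangle has a neighbour on it, so a triangle
reaches every vertex and the graph is connected.
-/

open SimpleGraph

/-- `G` is `H`-free: no induced subgraph of `G` is isomorphic to `H`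
(an induced copy is a graph embedding). -/
def InducedFree {α β : Type*} (H : SimpleGraph β) (G : SimpleGraph α) : Prop :=
  ¬ Nonempty (H ↪g G)

/-- The claw `K_{1,3}`: center `0` with leaves `1,2,3`. -/
def claw : SimpleGraph (Fin 4) := fromEdgeSet {s(0,1), s(0,2), s(0,3)}

/-- `K1 ∪ K3`: a triangle `1,2,3` together with the isolated vertex `0`
(the complement of the claw). -/
def K1uK3 : SimpleGraph (Fin 4) := fromEdgeSet {s(1,2), s(1,3), s(2,3)}

section

variable {V : Type*} {G : SimpleGraph V}

def clawEmbedding {v a b c : V} (hva : G.Adj v a) (hvb : G.Adj v b) (hvc : G.Adj v c)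
    (hab : a ≠ b) (hac : a ≠ c) (hbc : b ≠ c)
    (nab : ¬ G.Adj a b) (nac : ¬ G.Adj a c) (nbc : ¬ G.Adj b c) :
    claw ↪g G where
  toFun := ![v, a, b, c]
  inj' i j h := by
    fin_cases i <;> fin_cases j <;>
      simp_all [G.ne_of_adj hva, G.ne_of_adj hvb, G.ne_of_adj hvc]
  map_rel_iff' {i j} := by
    show G.Adj (![v, a, b, c] i) (![v, a, b, c] j) ↔ claw.Adj i j
    fin_cases i <;> fin_cases j <;> simp_all [claw, G.adj_comm]

def K1uK3Embedding {w v x y : V} (hvx : G.Adj v x) (hvy : G.Adj v y) (hxy : G.Adj x y)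
    (hwv : w ≠ v) (hwx : w ≠ x) (hwy : w ≠ y)
    (nwv : ¬ G.Adj w v) (nwx : ¬ G.Adj w x) (nwy : ¬ G.Adj w y) :
    K1uK3 ↪g G where
  toFun := ![w, v, x, y]
  inj' i j h := by
    fin_cases i <;> fin_cases j <;>
      simp_all [G.ne_of_adj hvx, G.ne_of_adj hvy, G.ne_of_adj hxy]
  map_rel_iff' {i j} := by
    show G.Adj (![w, v, x, y] i) (![w, v, x, y] j) ↔ K1uK3.Adj i j
    fin_cases i <;> fin_cases j <;> simp_all [K1uK3, G.adj_comm]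

theorem InducedFree.adj_of_claw {v a b c : V} (hclaw : InducedFree claw G)
    (hva : G.Adj v a) (hvb : G.Adj v b) (hvc : G.Adj v c)
    (hab : a ≠ b) (hac : a ≠ c) (hbc : b ≠ c) :
    G.Adj a b ∨ G.Adj a c ∨ G.Adj b c := by
  by_contra! h
  exact hclaw ⟨clawEmbedding hva hvb hvc hab hac hbc h.1 h.2.1 h.2.2⟩

theorem InducedFree.adj_triangle_of_K1uK3 {w v x y : V} (hfree : InducedFree K1uK3 G)
    (hvx : G.Adj v x) (hvy : G.Adj v y) (hxy : G.Adj x y)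
    (hwv : w ≠ v) (hwx : w ≠ x) (hwy : w ≠ y) :
    G.Adj w v ∨ G.Adj w x ∨ G.Adj w y := by
  by_contra! h
  exact hfree ⟨K1uK3Embedding hvx hvy hxy hwv hwx hwy h.1 h.2.1 h.2.2⟩

theorem InducedFree.connected_of_K1uK3 {v x y : V} (hfree : InducedFree K1uK3 G)
    (hvx : G.Adj v x) (hvy : G.Adj v y) (hxy : G.Adj x y) : G.Connected := by
  refine G.connected_iff_exists_forall_reachable.2 ⟨v, fun w => ?_⟩
  by_cases hwv : w = v
  · exact hwv ▸ Reachable.rfl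
  by_cases hwx : w = x
  · exact hwx ▸ hvx.reachable
  by_cases hwy : w = y
  · exact hwy ▸ hvy.reachable
  rcases hfree.adj_triangle_of_K1uK3 hvx hvy hxy hwv hwx hwy with h | h | h
  · exact h.symm.reachable
  · exact hvx.reachable.trans h.symm.reachable
  · exact hvy.reachable.trans h.symm.reachable

end

theorem disconnected_claw_coclaw_free_maxdeg_le_two_general {V : Type*}
    (G : SimpleGraph V) (hdisc : ¬ G.Connected)
    (hclaw : InducedFree claw G) (hK1uK3 : InducedFree K1uK3 G) :
    ∀ v a b c : V, G.Adj v a → G.Adj v b → G.Adj v c →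
      a = b ∨ a = c ∨ b = c := by
  intro v a b c hva hvb hvc
  by_contra! hne
  obtain ⟨hab, hac, hbc⟩ := hne
  apply hdisc
  rcases hclaw.adj_of_claw hva hvb hvc hab hac hbc with h | h | h
  · exact hK1uK3.connected_of_K1uK3 hva hvb h
  · exact hK1uK3.connected_of_K1uK3 hva hvc h
  · exact hK1uK3.connected_of_K1uK3 hvb hvc h

theorem disconnected_claw_coclaw_free_maxdeg_le_two {V : Type*} [Fintype V]
    (G : SimpleGraph V) (hdisc : ¬ G.Connected)
    (hclaw : InducedFree claw G) (hK1uK3 : InducedFree K1uK3 G) :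
    ∀ v a b c : V, G.Adj v a → G.Adj v b → G.Adj v c →
      a = b ∨ a = c ∨ b = c :=
  disconnected_claw_coclaw_free_maxdeg_le_two_general G hdisc hclaw hK1uK3
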